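/- arXiv:math/0404179 — 5 statements merged into one kernel-verified Lean document; each statement's English description precedes it below -/
import Mathlib

section
/- If P is a hereditary property, (G,f) satisfies P, and W is a finite set of vertices of G, then there exists a finite f-factor F of G such that (G−F, f−d_F) satisfies P, d_F(x) = f(x) for every x ∈ W with f(x) finite, and d_F(x) > 0 for every x ∈ W with f(x) infinite. -/
open Cardinal Set
open scoped Classical

namespace FFactor

variable {V : Type}

/-- Degree of `x` with respect to an edge set `F`. -/
def deg (F : Set (Sym2 V)) (x : V) : Cardinal :=
  Cardinal.mk {e : Sym2 V // e ∈ F ∧ x ∈ e}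

/-- `(G, f) ∈ C`: edges are genuine 2-element sets and `f x ≤ d_E x`. -/
def inC (E : Set (Sym2 V)) (f : V → Cardinal) : Prop :=
  (∀ e ∈ E, ¬ e.IsDiag) ∧ ∀ x, f x ≤ deg E x

/-- `F` is an `f`-factor of the graph with edge set `E`. -/
def IsFactor (E F : Set (Sym2 V)) (f : V → Cardinal) : Prop :=
  F ⊆ E ∧ ∀ x, deg F x ≤ f x

/-- `F` is a perfect `f`-factor. -/
def IsPerfect (E F : Set (Sym2 V)) (f : V → Cardinal) : Prop :=
  F ⊆ E ∧ ∀ x, deg F x = f x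

/-- The function `f_{x,y}`: decrease `f` by one at `x` and `y` when `1 ≤ f v < ℵ₀`. -/
noncomputable def fxy (f : V → Cardinal) (x y : V) : V → Cardinal := fun v =>
  if (v = x ∨ v = y) ∧ 1 ≤ f v ∧ f v < ℵ₀ then (((f v).toNat - 1 : ℕ) : Cardinal) else f v

/-- A property of pairs `(G, f)` (over arbitrary vertex types). -/
def GraphProp : Type 1 := ∀ (W : Type), Set (Sym2 W) → (W → Cardinal) → Prop

/-- `P` is a hereditary property. (`P (G,f)` entails `(G,f) ∈ C`.) -/
def Hereditary (P : GraphProp) : Prop :=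
  ∀ (W : Type) (E : Set (Sym2 W)) (f : W → Cardinal), P W E f →
    inC E f ∧ ∀ x : W, 0 < f x →
      ∃ y : W, 0 < f y ∧ s(x, y) ∈ E ∧ P W (E \ {s(x, y)}) (fxy f x y)

/-- `(G,f)` is an `α`-obstruction. -/
inductive IsObstruction : ∀ {W : Type}, Ordinal.{0} → Set (Sym2 W) → (W → Cardinal) → Prop
  | mk {W : Type} (α : Ordinal.{0}) (E : Set (Sym2 W)) (f : W → Cardinal) (x : W)
      (β : W → Ordinal.{0}) (hx : 0 < f x)
      (h : ∀ y : W, s(x, y) ∈ E → 0 < f y →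
        IsObstruction (β y) (E \ {s(x, y)}) (fxy f x y))
      (hα : α = ⨆ y : {y : W // s(x, y) ∈ E ∧ 0 < f y}, Order.succ (β y.1)) :
      IsObstruction α E f

/-- The property `P₂`. -/
def P2 : GraphProp := fun _ E f => inC E f ∧ ∀ α, ¬ IsObstruction α E f

/-- The property `P₁`. -/
def P1 : GraphProp := fun _ E f => inC E f ∧ ∃ F, IsPerfect E F f

/-- `(v_i)_{0 ≤ i < k}` is a trail (`k ≤ ω`, modelled as `k : ℕ∞`). -/
def IsTrail (E : Set (Sym2 V)) (k : ℕ∞) (v : ℕ → V) : Prop :=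
  1 ≤ k ∧
  (∀ i : ℕ, 0 < i → (i : ℕ∞) < k → s(v (i - 1), v i) ∈ E) ∧
  (∀ i j : ℕ, 0 < i → 0 < j → (i : ℕ∞) < k → (j : ℕ∞) < k → i ≠ j →
    s(v (i - 1), v i) ≠ s(v (j - 1), v j))

/-- `(v_i)_{0 ≤ i < k}` is an `F`-augmenting trail. -/
def IsAugTrail (E F : Set (Sym2 V)) (f : V → Cardinal) (k : ℕ∞) (v : ℕ → V) : Prop :=
  IsTrail E k v ∧ 1 < k ∧
  (∀ i : ℕ, 0 < i → (i : ℕ∞) < k → (s(v (i - 1), v i) ∈ F ↔ Even i)) ∧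
  deg F (v 0) < f (v 0) ∧
  (k = ⊤ ∨ ∃ n : ℕ, k = (n : ℕ∞) ∧ Even n ∧
    ((v 0 ≠ v (n - 1) ∧ deg F (v (n - 1)) < f (v (n - 1))) ∨
     (v 0 = v (n - 1) ∧ deg F (v (n - 1)) + 1 < f (v (n - 1)))))

/-- The property `P₄`. -/
def P4 : GraphProp := fun _ E f =>
  inC E f ∧ ∀ F, IsFactor E F f → ∀ x, deg F x < f x →
    ∃ (k : ℕ∞) (v : _ → _), v 0 = x ∧ IsAugTrail E F f k v

/-- `C` is closed unbounded in `o`. -/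
def IsClubIn (C : Set Ordinal) (o : Ordinal) : Prop :=
  C ⊆ Set.Iio o ∧
  (∀ a < o, ∃ b ∈ C, a ≤ b) ∧
  (∀ a < o, (C ∩ Set.Iio a).Nonempty → sSup (C ∩ Set.Iio a) = a → a ∈ C)

/-- `S` is stationary in `o`. -/
def IsStationaryIn (S : Set Ordinal) (o : Ordinal) : Prop :=
  ∀ C, IsClubIn C o → (S ∩ C).Nonempty

/-- `V_α = (V \ A) ∪ f⁻¹(c)`. -/
def subV (f : V → Cardinal) (c : Cardinal) (A : Set V) : Set V :=
  Aᶜ ∪ {x | f x = c}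

/-- `E_α = {{x,y} ∈ E : x ∈ V_α, y ∈ V \ A}`. -/
def subE (E : Set (Sym2 V)) (f : V → Cardinal) (c : Cardinal) (A : Set V) : Set (Sym2 V) :=
  {e ∈ E | ∃ x y, e = s(x, y) ∧ x ∈ subV f c A ∧ y ∉ A}

/-- The edge set of a graph induced on the vertex subset `S`. -/
def inducedE (S : Set V) (E' : Set (Sym2 V)) : Set (Sym2 ↥S) :=
  {e : Sym2 ↥S | e.map Subtype.val ∈ E'}

/-- `(A_α)_{α < c.ord}` is a `P`-destruction of `(G, f)`, `c = κ⁺`. -/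
def PDestruction (P : GraphProp) (E : Set (Sym2 V)) (f : V → Cardinal)
    (c : Cardinal) (A : Ordinal → Set V) : Prop :=
  (∀ α < c.ord, ∀ β, α ≤ β → β < c.ord → A α ⊆ A β) ∧
  (∀ α < c.ord, Cardinal.mk (A α) < c) ∧
  (∀ α < c.ord, Order.IsSuccLimit α → A α = ⋃ β : Set.Iio α, A β.1) ∧
  (⋃ α : Set.Iio c.ord, A α.1) = Set.univ ∧
  IsStationaryIn {α | α < c.ord ∧
    ¬ P ↥(subV f c (A α)) (inducedE (subV f c (A α)) (subE E f c (A α)))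
        (fun x => f x.1)} c.ord

/-- `(G, f)` is `P`-destructed. -/
def PDestructed (P : GraphProp) (E : Set (Sym2 V)) (f : V → Cardinal) (c : Cardinal) : Prop :=
  ∃ A : Ordinal → Set V, PDestruction P E f c A

/-- The function `f - d_F`, for `F` a finite factor (with `ℵ₀ - n = ℵ₀`). -/
noncomputable def fsub (f : V → Cardinal) (F : Set (Sym2 V)) : V → Cardinal := fun x =>
  if f x < ℵ₀ then (((f x).toNat - (deg F x).toNat : ℕ) : Cardinal) else f x

/-- `F` is a `κ`-perfect `f`-factor of `(V, E)`. -/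
def IsKPerfect (κ : Cardinal) (E F : Set (Sym2 V)) (f : V → Cardinal) : Prop :=
  IsFactor E F f ∧ (∀ x, f x ≤ κ → deg F x = f x) ∧ ∀ x, κ < f x → 0 < deg F x


/-!
Heredity removes one edge `xy` at a prescribed vertex `x` with `f x > 0` while keeping `P`, and
`f - d_{xy} = f_{x,y}`. Such removals compose: if `F₁` keeps `P` for `(E, f)` and `F₂` keeps it for
`(E \ F₁, f - d_{F₁})`, then `F₁ ∪ F₂` keeps it for `(E, f)`, since
`(f - d_{F₁}) - d_{F₂} = f - d_{F₁ ∪ F₂}`. Removing `f a` edges at `a` (one if `f a` is infinite)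
saturates a single vertex, and the vertices of `W` are treated one after the other: a vertex
already saturated keeps its degree `f a` because its residual demand is `0`, or keeps a positive
degree if `f a` is infinite.
-/

section FiniteFactors

variable {V : Type}

lemma deg_eq_mk_inter (F : Set (Sym2 V)) (x : V) :
    deg F x = #↥(F ∩ {e | x ∈ e}) := rfl

@[simp]
lemma deg_empty (x : V) : deg (∅ : Set (Sym2 V)) x = 0 := by
  simp [deg_eq_mk_inter]

lemma deg_lt_aleph0 {F : Set (Sym2 V)} (hF : F.Finite) (x : V) : deg F x < ℵ₀ :=
  (hF.inter_of_left _).lt_aleph0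

lemma deg_singleton_of_mem {e : Sym2 V} {x : V} (hx : x ∈ e) : deg {e} x = 1 := by
  rw [deg_eq_mk_inter, Set.singleton_inter_of_mem (show e ∈ {e : Sym2 V | x ∈ e} from hx),
    mk_singleton]

lemma deg_singleton_of_notMem {e : Sym2 V} {x : V} (hx : x ∉ e) : deg {e} x = 0 := by
  rw [← deg_empty x, deg_eq_mk_inter, deg_eq_mk_inter, Set.empty_inter,
    Set.singleton_inter_of_notMem (show e ∉ {e : Sym2 V | x ∈ e} from hx)]

lemma deg_union {F₁ F₂ : Set (Sym2 V)} (h : Disjoint F₁ F₂) (x : V) :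
    deg (F₁ ∪ F₂) x = deg F₁ x + deg F₂ x := by
  rw [deg_eq_mk_inter, Set.union_inter_distrib_right]
  exact mk_union_of_disjoint (h.mono Set.inter_subset_left Set.inter_subset_left)

@[simp]
lemma fsub_empty (f : V → Cardinal) : fsub f ∅ = f := by
  funext x
  by_cases hx : f x < ℵ₀ <;> simp [fsub, hx, cast_toNat_of_lt_aleph0]

lemma fsub_lt_aleph0_iff {f : V → Cardinal} {F : Set (Sym2 V)} {x : V} :
    fsub f F x < ℵ₀ ↔ f x < ℵ₀ := by
  unfold fsub
  split_ifs with hx <;> simp [hx]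

lemma deg_add_fsub {f : V → Cardinal} {F : Set (Sym2 V)} (hF : F.Finite) {x : V}
    (h : deg F x ≤ f x) : deg F x + fsub f F x = f x := by
  unfold fsub
  split_ifs with hx
  · obtain ⟨m, hm⟩ := lt_aleph0.1 hx
    obtain ⟨d, hd⟩ := lt_aleph0.1 (deg_lt_aleph0 hF x)
    rw [hm, hd] at h ⊢
    have hdm : d ≤ m := by exact_mod_cast h
    simp only [toNat_natCast]
    norm_cast
    omega
  · exact add_eq_right (not_lt.1 hx) h

lemma fsub_fsub {f : V → Cardinal} {F₁ F₂ : Set (Sym2 V)} (hF₁ : F₁.Finite) (hF₂ : F₂.Finite)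
    (h : Disjoint F₁ F₂) : fsub (fsub f F₁) F₂ = fsub f (F₁ ∪ F₂) := by
  funext x
  obtain ⟨d₁, hd₁⟩ := lt_aleph0.1 (deg_lt_aleph0 hF₁ x)
  obtain ⟨d₂, hd₂⟩ := lt_aleph0.1 (deg_lt_aleph0 hF₂ x)
  by_cases hx : f x < ℵ₀
  · simp only [fsub, hx, natCast_lt_aleph0, if_true, deg_union h, hd₁, hd₂, ← Nat.cast_add,
      toNat_natCast, Nat.sub_sub]
  · simp only [fsub, hx, if_false]

lemma fsub_singleton (f : V → Cardinal) (x y : V) : fsub f {s(x, y)} = fxy f x y := by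
  funext v
  by_cases hv : v = x ∨ v = y
  · rw [fsub, fxy, deg_singleton_of_mem (Sym2.mem_iff.2 hv), one_toNat]
    by_cases hfin : f v < ℵ₀
    · by_cases hpos : 1 ≤ f v
      · simp [hv, hpos, hfin]
      · rw [not_le, Cardinal.lt_one_iff] at hpos
        simp [hpos]
    · simp [hfin]
  · rw [fxy, if_neg (fun h => hv h.1), fsub, deg_singleton_of_notMem (mt Sym2.mem_iff.1 hv),
      map_zero, Nat.sub_zero]
    split_ifs with hfin
    · exact cast_toNat_of_lt_aleph0 hfin
    · rfl

lemma IsFactor.union {E F₁ F₂ : Set (Sym2 V)} {f : V → Cardinal} (hF₁ : F₁.Finite)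
    (h₁ : IsFactor E F₁ f) (h₂ : IsFactor (E \ F₁) F₂ (fsub f F₁)) :
    IsFactor E (F₁ ∪ F₂) f := by
  refine ⟨Set.union_subset h₁.1 (h₂.1.trans Set.sdiff_subset), fun x => ?_⟩
  calc deg (F₁ ∪ F₂) x = deg F₁ x + deg F₂ x :=
        deg_union (Set.disjoint_of_subset_right h₂.1 Set.disjoint_sdiff_right) x
    _ ≤ deg F₁ x + fsub f F₁ x := add_le_add_right (h₂.2 x) _
    _ = f x := deg_add_fsub hF₁ (h₁.2 x)

def IsPreservingFactor (P : GraphProp) (E : Set (Sym2 V)) (f : V → Cardinal)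
    (F : Set (Sym2 V)) : Prop :=
  F.Finite ∧ IsFactor E F f ∧ P V (E \ F) (fsub f F)

def Saturates (W : Set V) (F : Set (Sym2 V)) (f : V → Cardinal) : Prop :=
  (∀ x ∈ W, f x < ℵ₀ → deg F x = f x) ∧ (∀ x ∈ W, ℵ₀ ≤ f x → 0 < deg F x)

lemma saturates_empty (F : Set (Sym2 V)) (f : V → Cardinal) : Saturates ∅ F f := by
  simp [Saturates]

lemma isPreservingFactor_empty {P : GraphProp} {E : Set (Sym2 V)} {f : V → Cardinal}
    (h : P V E f) : IsPreservingFactor P E f ∅ :=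
  ⟨Set.finite_empty, ⟨Set.empty_subset _, fun x => by simp⟩, by simpa using h⟩

lemma IsPreservingFactor.union {P : GraphProp} {E F₁ F₂ : Set (Sym2 V)} {f : V → Cardinal}
    (h₁ : IsPreservingFactor P E f F₁) (h₂ : IsPreservingFactor P (E \ F₁) (fsub f F₁) F₂) :
    IsPreservingFactor P E f (F₁ ∪ F₂) := by
  obtain ⟨hF₁, hfac₁, -⟩ := h₁
  obtain ⟨hF₂, hfac₂, hP₂⟩ := h₂
  refine ⟨hF₁.union hF₂, hfac₁.union hF₁ hfac₂, ?_⟩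
  have hdisj : Disjoint F₁ F₂ := Set.disjoint_of_subset_right hfac₂.1 Set.disjoint_sdiff_right
  rwa [← Set.sdiff_sdiff, ← fsub_fsub hF₁ hF₂ hdisj]

lemma Saturates.union {E F₁ F₂ : Set (Sym2 V)} {f : V → Cardinal} {W₁ W₂ : Set V}
    (hF₁ : F₁.Finite) (h₁ : IsFactor E F₁ f) (h₂ : IsFactor (E \ F₁) F₂ (fsub f F₁))
    (s₁ : Saturates W₁ F₁ f) (s₂ : Saturates W₂ F₂ (fsub f F₁)) :
    Saturates (W₁ ∪ W₂) (F₁ ∪ F₂) f := by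
  have hdeg : ∀ x, deg (F₁ ∪ F₂) x = deg F₁ x + deg F₂ x :=
    deg_union (Set.disjoint_of_subset_right h₂.1 Set.disjoint_sdiff_right)
  have hle : ∀ x, deg (F₁ ∪ F₂) x ≤ f x := (h₁.union hF₁ h₂).2
  constructor
  · rintro x (hx | hx) hfin
    · exact le_antisymm (hle x) (s₁.1 x hx hfin ▸ hdeg x ▸ le_self_add)
    · rw [hdeg, s₂.1 x hx (fsub_lt_aleph0_iff.2 hfin), deg_add_fsub hF₁ (h₁.2 x)]
  · rintro x (hx | hx) hinf
    · exact (s₁.2 x hx hinf).trans_le (hdeg x ▸ le_self_add)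
    · exact (s₂.2 x hx (not_lt.1 (mt fsub_lt_aleph0_iff.1 (not_lt.2 hinf)))).trans_le
        (hdeg x ▸ le_add_self)

lemma exists_isPreservingFactor_edge {P : GraphProp} (hP : Hereditary P) {E : Set (Sym2 V)}
    {f : V → Cardinal} (h : P V E f) {x : V} (hx : 0 < f x) :
    ∃ y, IsPreservingFactor P E f {s(x, y)} := by
  obtain ⟨y, hy, hxy, hPxy⟩ := (hP V E f h).2 x hx
  refine ⟨y, Set.finite_singleton _, ⟨Set.singleton_subset_iff.2 hxy, fun v => ?_⟩, ?_⟩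
  · by_cases hv : v = x ∨ v = y
    · rw [deg_singleton_of_mem (Sym2.mem_iff.2 hv), Cardinal.one_le_iff_pos]
      rcases hv with rfl | rfl <;> assumption
    · rw [deg_singleton_of_notMem (mt Sym2.mem_iff.1 hv)]
      exact zero_le
  · rwa [fsub_singleton]

lemma exists_saturating_singleton_of_eq_natCast {P : GraphProp} (hP : Hereditary P)
    {E : Set (Sym2 V)} {f : V → Cardinal} (h : P V E f) {a : V} {n : ℕ} (ha : f a = n) :
    ∃ F, IsPreservingFactor P E f F ∧ Saturates {a} F f := by
  induction n generalizing E f with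
  | zero =>
    refine ⟨∅, isPreservingFactor_empty h, ?_, ?_⟩ <;> rintro x rfl <;> simp [ha, aleph0_ne_zero]
  | succ n ih =>
    obtain ⟨y, h₁⟩ := exists_isPreservingFactor_edge hP h (ha ▸ Nat.cast_pos.2 n.succ_pos)
    have ha₁ : fsub f {s(a, y)} a = n := by
      rw [fsub, if_pos (ha ▸ natCast_lt_aleph0), ha, deg_singleton_of_mem (Sym2.mem_mk_left a y),
        toNat_natCast, one_toNat, Nat.add_sub_cancel]
    obtain ⟨F₂, h₂, s₂⟩ := ih h₁.2.2 ha₁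
    refine ⟨_, h₁.union h₂, ?_⟩
    simpa using (saturates_empty _ f).union h₁.1 h₁.2.1 h₂.2.1 s₂

lemma exists_saturating_singleton {P : GraphProp} (hP : Hereditary P) {E : Set (Sym2 V)}
    {f : V → Cardinal} (h : P V E f) (a : V) :
    ∃ F, IsPreservingFactor P E f F ∧ Saturates {a} F f := by
  by_cases ha : f a < ℵ₀
  · obtain ⟨n, hn⟩ := lt_aleph0.1 ha
    exact exists_saturating_singleton_of_eq_natCast hP h hn
  · obtain ⟨y, h₁⟩ := exists_isPreservingFactor_edge hP h (aleph0_pos.trans_le (not_lt.1 ha))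
    refine ⟨_, h₁, ?_, ?_⟩ <;> rintro x rfl
    · exact fun hfin => absurd hfin ha
    · simp [deg_singleton_of_mem (Sym2.mem_mk_left x y)]

end FiniteFactors

/-- Remark. -/
theorem statement_0 (P : GraphProp) (hP : Hereditary P) (V : Type)
    (E : Set (Sym2 V)) (f : V → Cardinal) (h : P V E f)
    (W : Set V) (hW : W.Finite) :
    ∃ F : Set (Sym2 V), F.Finite ∧ IsFactor E F f ∧
      P V (E \ F) (fsub f F) ∧
      (∀ x ∈ W, f x < ℵ₀ → deg F x = f x) ∧
      (∀ x ∈ W, ℵ₀ ≤ f x → 0 < deg F x) := by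
  suffices ∃ F, IsPreservingFactor P E f F ∧ Saturates W F f by
    obtain ⟨F, ⟨hF, hfac, hPF⟩, hsat⟩ := this
    exact ⟨F, hF, hfac, hPF, hsat⟩
  induction W, hW using Set.Finite.induction_on with
  | empty => exact ⟨∅, isPreservingFactor_empty h, saturates_empty _ f⟩
  | @insert a W _ _ ih =>
    obtain ⟨F₁, h₁, s₁⟩ := ih
    obtain ⟨F₂, h₂, s₂⟩ := exists_saturating_singleton hP h₁.2.2 a
    refine ⟨F₁ ∪ F₂, h₁.union h₂, ?_⟩
    rw [Set.insert_eq, Set.union_comm]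
    exact s₁.union h₁.1 h₁.2.1 h₂.2.1 s₂

end FFactor
end

section
/- The property P₂(G,f) := "(G,f) is not an α-obstruction for any ordinal α" is a hereditary property. -/
open Cardinal Set
open scoped Classical

/-! If no neighbour `y` of `x` with `f y > 0` kept `P₂` after deleting `xy`, then every
`(G - xy, f_{x,y})` would be a `β_y`-obstruction (it stays in `C`), and `x` would witness that
`(G, f)` is an obstruction. -/

namespace Cardinal

theorem le_of_le_add_one_of_aleph0_le {a b : Cardinal} (ha : ℵ₀ ≤ a) (h : a ≤ b + 1) :
    a ≤ b := by
  have hb : ℵ₀ ≤ b := by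
    by_contra! hb
    exact (add_lt_aleph0 hb one_lt_aleph0).not_ge (ha.trans h)
  rwa [add_one_eq hb] at h

theorem natCast_toNat_sub_one_le {a b : Cardinal} (ha : a < ℵ₀) (h : a ≤ b + 1) :
    ((a.toNat - 1 : ℕ) : Cardinal) ≤ b := by
  rcases lt_or_ge b ℵ₀ with hb | hb
  · obtain ⟨m, rfl⟩ := lt_aleph0.1 ha
    obtain ⟨n, rfl⟩ := lt_aleph0.1 hb
    rw [toNat_natCast]
    have : m ≤ n + 1 := by exact_mod_cast h
    exact_mod_cast Nat.sub_le_of_le_add this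
  · exact natCast_lt_aleph0.le.trans hb

end Cardinal

namespace FFactor

variable {V : Type}

theorem deg_le_deg_sdiff_singleton_add_one (E : Set (Sym2 V)) (e : Sym2 V) (v : V) :
    deg E v ≤ deg (E \ {e}) v + 1 := by
  have hsub : {e' | e' ∈ E ∧ v ∈ e'} ⊆ {e' | e' ∈ E \ {e} ∧ v ∈ e'} ∪ {e} := by
    rintro e' ⟨he'E, hve'⟩
    by_cases he' : e' = e
    · exact Or.inr he'
    · exact Or.inl ⟨⟨he'E, he'⟩, hve'⟩
  calc deg E v ≤ Cardinal.mk ↥({e' | e' ∈ E \ {e} ∧ v ∈ e'} ∪ {e}) := mk_le_mk_of_subset hsub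
    _ ≤ deg (E \ {e}) v + 1 := (mk_union_le _ _).trans_eq (by rw [mk_singleton]; rfl)

theorem deg_sdiff_singleton_of_notMem (E : Set (Sym2 V)) {e : Sym2 V} {v : V} (hv : v ∉ e) :
    deg (E \ {e}) v = deg E v := by
  have hset : {e' | e' ∈ E \ {e} ∧ v ∈ e'} = {e' | e' ∈ E ∧ v ∈ e'} := by
    ext e'
    exact ⟨fun h => ⟨h.1.1, h.2⟩, fun h => ⟨⟨h.1, by rintro rfl; exact hv h.2⟩, h.2⟩⟩
  exact congrArg (fun s : Set (Sym2 V) => Cardinal.mk s) hset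

theorem fxy_apply_of_ne {f : V → Cardinal} {x y v : V} (hx : v ≠ x) (hy : v ≠ y) :
    fxy f x y v = f v :=
  if_neg fun h => h.1.elim hx hy

theorem fxy_apply_le {f : V → Cardinal} {x y v : V} {d : Cardinal} (hv : v = x ∨ v = y)
    (h : f v ≤ d + 1) : fxy f x y v ≤ d := by
  unfold fxy
  by_cases hfin : 1 ≤ f v ∧ f v < ℵ₀
  · rw [if_pos ⟨hv, hfin⟩]
    exact Cardinal.natCast_toNat_sub_one_le hfin.2 h
  · rw [if_neg fun h' => hfin h'.2]
    rcases not_and_or.1 hfin with hzero | hinf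
    · rw [Cardinal.lt_one_iff.1 (not_le.1 hzero)]
      exact zero_le
    · exact Cardinal.le_of_le_add_one_of_aleph0_le (not_lt.1 hinf) h

theorem inC_sdiff_fxy {E : Set (Sym2 V)} {f : V → Cardinal} (hC : inC E f) (x y : V) :
    inC (E \ {s(x, y)}) (fxy f x y) := by
  refine ⟨fun e he => hC.1 e he.1, fun v => ?_⟩
  by_cases hv : v = x ∨ v = y
  · exact fxy_apply_le hv ((hC.2 v).trans (deg_le_deg_sdiff_singleton_add_one E _ v))
  · push Not at hv
    have hve : v ∉ s(x, y) := by simpa [Sym2.mem_iff] using hv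
    rw [fxy_apply_of_ne hv.1 hv.2, deg_sdiff_singleton_of_notMem E hve]
    exact hC.2 v

theorem exists_isObstruction_of_forall_adj {W : Type} {E : Set (Sym2 W)} {f : W → Cardinal}
    {x : W} (hx : 0 < f x)
    (H : ∀ y, s(x, y) ∈ E → 0 < f y → ∃ α, IsObstruction α (E \ {s(x, y)}) (fxy f x y)) :
    ∃ α, IsObstruction α E f := by
  have H' : ∀ y, ∃ α, s(x, y) ∈ E → 0 < f y →
      IsObstruction α (E \ {s(x, y)}) (fxy f x y) := fun y => by
    by_cases h : s(x, y) ∈ E ∧ 0 < f y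
    · exact (H y h.1 h.2).imp fun _ hα _ _ => hα
    · exact ⟨0, fun hE hy => (h ⟨hE, hy⟩).elim⟩
  choose β hβ using H'
  exact ⟨_, .mk _ E f x β hx hβ rfl⟩

/-- `P₂` ("not an `α`-obstruction for any `α`") is hereditary. -/
theorem statement_2 : Hereditary P2 := by
  rintro W E f ⟨hC, hfree⟩
  refine ⟨hC, fun x hx => ?_⟩
  by_contra! hstuck
  obtain ⟨α, hα⟩ := exists_isObstruction_of_forall_adj hx fun y hE hy => by
    simpa [P2, inC_sdiff_fxy hC x y] using hstuck y hy hE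
  exact hfree α hα

end FFactor
end

section
/- Let (G,f) ∈ C with |V(G)| = ℵ₀. If P is a hereditary property and P(G,f) holds, then G possesses a perfect f-factor. -/
/-!
Enumerate the vertices so that each one occurs infinitely often, and run a greedy process:
at step `n`, if the enumerated vertex `x` still has positive demand, heredity supplies an edge
`xy` with `y` of positive demand that keeps the property; the edge is put into the factor and
deleted, and the finite demands at `x` and `y` drop by one. A finite demand is eventually
exhausted, because a vertex visited while its demand is positive loses one unit; a vertex of
demand `ℵ₀` keeps it and so receives a new edge at each of its infinitely many visits.
-/

open Cardinal Set
open scoped Classical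

namespace FFactor

variable {V : Type}

open Filter

lemma fxy_le (f : V → Cardinal) (x y v : V) : fxy f x y v ≤ f v := by
  unfold fxy
  split_ifs with hv
  · calc (((f v).toNat - 1 : ℕ) : Cardinal) ≤ ((f v).toNat : Cardinal) := by
          exact_mod_cast Nat.sub_le _ _
      _ = f v := Cardinal.cast_toNat_of_lt_aleph0 hv.2.2
  · exact le_rfl

lemma fxy_eq_of_not_lt_aleph0 {f : V → Cardinal} {x y v : V} (hv : ¬ f v < ℵ₀) :
    fxy f x y v = f v :=
  if_neg fun h => hv h.2.2

lemma fxy_eq_of_not_mem {f : V → Cardinal} {x y v : V} (hv : v ∉ s(x, y)) :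
    fxy f x y v = f v :=
  if_neg fun h => hv (Sym2.mem_iff.mpr h.1)

lemma fxy_add_one {f : V → Cardinal} {x y v : V} (hv : v ∈ s(x, y)) (hpos : 0 < f v)
    (hfin : f v < ℵ₀) : fxy f x y v + 1 = f v := by
  rw [fxy, if_pos ⟨Sym2.mem_iff.mp hv, Cardinal.one_le_iff_pos.mpr hpos, hfin⟩]
  obtain ⟨k, hk⟩ := Cardinal.lt_aleph0.mp hfin
  rw [hk] at hpos ⊢
  have hk_pos : 0 < k := by exact_mod_cast hpos
  rw [Cardinal.toNat_natCast]
  norm_cast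
  omega

lemma exists_nat_frequently_eq (W : Type) [Countable W] [Nonempty W] :
    ∃ tgt : ℕ → W, ∀ w, ∃ᶠ n in atTop, tgt n = w := by
  obtain ⟨s, hs⟩ := exists_surjective_nat W
  refine ⟨fun n => s n.unpair.1, fun w => frequently_atTop.mpr fun a => ?_⟩
  obtain ⟨k, rfl⟩ := hs w
  exact ⟨Nat.pair k a, Nat.right_le_pair k a, by simp⟩

/-- One step of the greedy process at `x`; `e` is the edge it puts into the factor. -/
def GreedyStep (E : Set (Sym2 V)) (f : V → Cardinal) (x : V) (e : Option (Sym2 V))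
    (E' : Set (Sym2 V)) (f' : V → Cardinal) : Prop :=
  (f x = 0 ∧ e = none ∧ E' = E ∧ f' = f) ∨
    ∃ y, 0 < f x ∧ 0 < f y ∧ s(x, y) ∈ E ∧ e = some s(x, y) ∧ E' = E \ {s(x, y)} ∧
      f' = fxy f x y

def IsGreedyRun (tgt : ℕ → V) (Es : ℕ → Set (Sym2 V)) (fs : ℕ → V → Cardinal)
    (ch : ℕ → Option (Sym2 V)) : Prop :=
  ∀ n, GreedyStep (Es n) (fs n) (tgt n) (ch n) (Es (n + 1)) (fs (n + 1))

def chosenEdges (ch : ℕ → Option (Sym2 V)) : Set (Sym2 V) :=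
  {e | ∃ n, ch n = some e}

def Touches (ch : ℕ → Option (Sym2 V)) (v : V) (n : ℕ) : Prop :=
  ∃ e, ch n = some e ∧ v ∈ e

lemma Hereditary.exists_greedyStep {P : GraphProp} (hP : Hereditary P) {E : Set (Sym2 V)}
    {f : V → Cardinal} (h : P V E f) (x : V) :
    ∃ e E' f', GreedyStep E f x e E' f' ∧ P V E' f' := by
  rcases eq_or_ne (f x) 0 with hx | hx
  · exact ⟨none, E, f, Or.inl ⟨hx, rfl, rfl, rfl⟩, h⟩
  · obtain ⟨y, hy, hxy, h'⟩ := (hP V E f h).2 x (pos_iff_ne_zero.mpr hx)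
    exact ⟨_, _, _, Or.inr ⟨y, pos_iff_ne_zero.mpr hx, hy, hxy, rfl, rfl, rfl⟩, h'⟩

lemma Hereditary.exists_isGreedyRun {P : GraphProp} (hP : Hereditary P) {E : Set (Sym2 V)}
    {f : V → Cardinal} (h : P V E f) (tgt : ℕ → V) :
    ∃ Es fs ch, Es 0 = E ∧ fs 0 = f ∧ IsGreedyRun tgt Es fs ch := by
  let State := {p : Set (Sym2 V) × (V → Cardinal) // P V p.1 p.2}
  have hstep (n : ℕ) (s : State) :
      ∃ (e : Option (Sym2 V)) (t : State), GreedyStep s.1.1 s.1.2 (tgt n) e t.1.1 t.1.2 := by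
    obtain ⟨e, E', f', hs, h'⟩ := hP.exists_greedyStep s.2 (tgt n)
    exact ⟨e, ⟨(E', f'), h'⟩, hs⟩
  choose ch next hnext using hstep
  let S : ℕ → State := fun n => Nat.rec ⟨(E, f), h⟩ next n
  exact ⟨fun n => (S n).1.1, fun n => (S n).1.2, fun n => ch n (S n), rfl, rfl,
    fun n => hnext n (S n)⟩

namespace IsGreedyRun

variable {tgt : ℕ → V} {Es : ℕ → Set (Sym2 V)} {fs : ℕ → V → Cardinal}
  {ch : ℕ → Option (Sym2 V)} (hrun : IsGreedyRun tgt Es fs ch)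
include hrun

lemma edges_antitone : Antitone Es := antitone_nat_of_succ_le fun n => by
  rcases hrun n with ⟨-, -, hE, -⟩ | ⟨y, -, -, -, -, hE, -⟩
  · exact hE.le
  · exact hE ▸ Set.sdiff_subset

lemma demand_antitone (v : V) : Antitone (fs · v) := antitone_nat_of_succ_le fun n => by
  rcases hrun n with ⟨-, -, -, hf⟩ | ⟨y, -, -, -, -, -, hf⟩
  · exact hf ▸ le_rfl
  · exact hf ▸ fxy_le _ _ _ _

lemma mem_of_chosen {n : ℕ} {e : Sym2 V} (hn : ch n = some e) : e ∈ Es n ∧ e ∉ Es (n + 1) := by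
  rcases hrun n with ⟨-, hnone, -, -⟩ | ⟨y, -, -, hxy, hsome, hE, -⟩
  · simp [hnone] at hn
  · obtain rfl : s(tgt n, y) = e := Option.some.inj (hsome.symm.trans hn)
    simp [hE, hxy]

lemma chosen_injective {m n : ℕ} {e : Sym2 V} (hm : ch m = some e) (hn : ch n = some e) :
    m = n := by
  by_contra hne
  wlog hlt : m < n generalizing m n
  · exact this hn hm (Ne.symm hne) (by omega)
  exact (hrun.mem_of_chosen hm).2 (hrun.edges_antitone hlt (hrun.mem_of_chosen hn).1)

lemma chosenEdges_subset : chosenEdges ch ⊆ Es 0 := fun _ ⟨n, hn⟩ =>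
  hrun.edges_antitone n.zero_le (hrun.mem_of_chosen hn).1

lemma touches_of_pos {n : ℕ} (h : 0 < fs n (tgt n)) : Touches ch (tgt n) n := by
  rcases hrun n with ⟨h0, -, -, -⟩ | ⟨y, -, -, -, hsome, -, -⟩
  · exact absurd h0 h.ne'
  · exact ⟨_, hsome, Sym2.mem_mk_left _ _⟩

lemma pos_of_touches {v : V} {n : ℕ} (h : Touches ch v n) : 0 < fs n v := by
  obtain ⟨e, he, hv⟩ := h
  rcases hrun n with ⟨-, hnone, -, -⟩ | ⟨y, hx, hy, -, hsome, -, -⟩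
  · simp [hnone] at he
  · obtain rfl : s(tgt n, y) = e := Option.some.inj (hsome.symm.trans he)
    rcases Sym2.mem_iff.mp hv with rfl | rfl
    exacts [hx, hy]

lemma demand_succ_of_not_touches {v : V} {n : ℕ} (h : ¬ Touches ch v n) :
    fs (n + 1) v = fs n v := by
  rcases hrun n with ⟨-, -, -, hf⟩ | ⟨y, -, -, -, hsome, -, hf⟩
  · rw [hf]
  · rw [hf, fxy_eq_of_not_mem fun hv => h ⟨_, hsome, hv⟩]

lemma demand_succ_add_one_of_touches {v : V} {n : ℕ} (h : Touches ch v n)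
    (hfin : fs n v < ℵ₀) : fs (n + 1) v + 1 = fs n v := by
  have hpos := hrun.pos_of_touches h
  obtain ⟨e, he, hv⟩ := h
  rcases hrun n with ⟨-, hnone, -, -⟩ | ⟨y, -, -, -, hsome, -, hf⟩
  · simp [hnone] at he
  · obtain rfl : s(tgt n, y) = e := Option.some.inj (hsome.symm.trans he)
    rw [hf]
    exact fxy_add_one hv hpos hfin

lemma demand_eq_of_not_lt_aleph0 {v : V} (h : ¬ fs 0 v < ℵ₀) (n : ℕ) : fs n v = fs 0 v := by
  induction n with
  | zero => rfl
  | succ n ih =>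
    rcases hrun n with ⟨-, -, -, hf⟩ | ⟨y, -, -, -, -, -, hf⟩
    · rw [hf, ih]
    · rw [hf, fxy_eq_of_not_lt_aleph0 (ih ▸ h), ih]

lemma demand_add_card_touches {v : V} (hfin : fs 0 v < ℵ₀) (n : ℕ) :
    fs n v + ((Finset.range n).filter (Touches ch v)).card = fs 0 v := by
  induction n with
  | zero => simp
  | succ n ih =>
    rw [Finset.range_add_one, Finset.filter_insert]
    by_cases ht : Touches ch v n
    · have hn_fin := (hrun.demand_antitone v n.zero_le).trans_lt hfin
      rw [if_pos ht, Finset.card_insert_of_notMem (by simp), Nat.cast_add_one, ← add_assoc,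
        add_right_comm, hrun.demand_succ_add_one_of_touches ht hn_fin, ih]
    · rw [if_neg ht, hrun.demand_succ_of_not_touches ht, ih]

lemma deg_chosenEdges (v : V) : deg (chosenEdges ch) v = #{n // Touches ch v n} := by
  let edgeOf : {n // Touches ch v n} → {e // e ∈ chosenEdges ch ∧ v ∈ e} := fun n =>
    ⟨n.2.choose, ⟨n, n.2.choose_spec.1⟩, n.2.choose_spec.2⟩
  have hbij : Function.Bijective edgeOf := by
    refine ⟨fun a b hab => Subtype.ext ?_, fun ⟨e, ⟨n, hn⟩, hv⟩ => ⟨⟨n, e, hn, hv⟩, ?_⟩⟩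
    · have he : a.2.choose = b.2.choose := congrArg Subtype.val hab
      exact hrun.chosen_injective a.2.choose_spec.1 (he ▸ b.2.choose_spec.1)
    · have hspec : Touches ch v n := ⟨e, hn, hv⟩
      exact Subtype.ext (Option.some.inj (hspec.choose_spec.1.symm.trans hn))
  exact (Cardinal.mk_congr (Equiv.ofBijective edgeOf hbij)).symm

lemma exists_demand_eq_zero {v : V} (htgt : ∃ᶠ n in atTop, tgt n = v) (hfin : fs 0 v < ℵ₀) :
    ∃ N, fs N v = 0 := by
  -- a visit to `v` after its demand has reached its minimum cannot find positive demand
  let N₀ := Function.argmin (fs · v)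
  obtain ⟨N, hN₀N, rfl⟩ := frequently_atTop.mp htgt N₀
  refine ⟨N, by_contra fun hne => ?_⟩
  have hN_fin := (hrun.demand_antitone (tgt N) N.zero_le).trans_lt hfin
  have hstep := hrun.demand_succ_add_one_of_touches
    (hrun.touches_of_pos (pos_iff_ne_zero.mpr hne)) hN_fin
  have hmin : fs N (tgt N) ≤ fs (N + 1) (tgt N) :=
    (hrun.demand_antitone (tgt N) hN₀N).trans (Function.argmin_le (fs · (tgt N)) (N + 1))
  obtain ⟨k, hk⟩ : ∃ k : ℕ, fs (N + 1) (tgt N) = k :=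
    Cardinal.lt_aleph0.mp ((hrun.demand_antitone (tgt N) N.le_succ).trans_lt hN_fin)
  rw [← hstep, hk] at hmin
  exact absurd (by exact_mod_cast hmin : k + 1 ≤ k) (by omega)

lemma mk_touches_of_lt_aleph0 {v : V} (htgt : ∃ᶠ n in atTop, tgt n = v)
    (hfin : fs 0 v < ℵ₀) : #{n // Touches ch v n} = fs 0 v := by
  obtain ⟨N, hN⟩ := hrun.exists_demand_eq_zero htgt hfin
  have htouch : {n | Touches ch v n} = (Finset.range N).filter (Touches ch v) := by
    ext n
    simp only [Set.mem_ofPred_eq, Finset.coe_filter, Finset.mem_range]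
    refine ⟨fun ht => ⟨?_, ht⟩, And.right⟩
    by_contra! hNn
    exact (hrun.pos_of_touches ht).ne' (le_antisymm (hN ▸ hrun.demand_antitone v hNn) zero_le)
  rw [← hrun.demand_add_card_touches hfin N, hN, zero_add, ← Cardinal.mk_coe_finset]
  exact congrArg (fun s : Set ℕ => #s) htouch

lemma mk_touches_of_eq_aleph0 {v : V} (htgt : ∃ᶠ n in atTop, tgt n = v) (hinf : fs 0 v = ℵ₀) :
    #{n // Touches ch v n} = ℵ₀ := by
  have hsub : {n | tgt n = v} ⊆ {n | Touches ch v n} := by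
    rintro n rfl
    refine hrun.touches_of_pos ?_
    rw [hrun.demand_eq_of_not_lt_aleph0 (hinf ▸ lt_irrefl ℵ₀) n, hinf]
    exact aleph0_pos
  have : Infinite {n // Touches ch v n} :=
    ((Nat.frequently_atTop_iff_infinite.mp htgt).mono hsub).to_subtype
  exact Cardinal.mk_eq_aleph0 _

theorem isPerfect_chosenEdges (htgt : ∀ v, ∃ᶠ n in atTop, tgt n = v)
    (hf : ∀ v, fs 0 v ≤ ℵ₀) : IsPerfect (Es 0) (chosenEdges ch) (fs 0) := by
  refine ⟨hrun.chosenEdges_subset, fun v => ?_⟩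
  rw [hrun.deg_chosenEdges]
  rcases (hf v).lt_or_eq with hfin | hinf
  · exact hrun.mk_touches_of_lt_aleph0 (htgt v) hfin
  · rw [hinf]
    exact hrun.mk_touches_of_eq_aleph0 (htgt v) hinf

end IsGreedyRun

theorem statement_5_general (V : Type) (E : Set (Sym2 V)) (f : V → Cardinal)
    (hV : Cardinal.mk V = ℵ₀) (hf : ∀ x, f x ≤ ℵ₀)
    (P : GraphProp) (hP : Hereditary P) (h : P V E f) :
    ∃ F, IsPerfect E F f := by
  have : Countable V := Cardinal.mk_le_aleph0_iff.mp hV.le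
  have : Nonempty V := Cardinal.mk_ne_zero_iff.mp (hV ▸ aleph0_ne_zero)
  obtain ⟨tgt, htgt⟩ := exists_nat_frequently_eq V
  obtain ⟨Es, fs, ch, rfl, rfl, hrun⟩ := hP.exists_isGreedyRun h tgt
  exact ⟨chosenEdges ch, hrun.isPerfect_chosenEdges htgt hf⟩

/-- Theorem 1. -/
theorem statement_5 (V : Type) (E : Set (Sym2 V)) (f : V → Cardinal)
    (hC : inC E f) (hV : Cardinal.mk V = ℵ₀) (hf : ∀ x, f x ≤ ℵ₀)
    (P : GraphProp) (hP : Hereditary P) (h : P V E f) :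
    ∃ F, IsPerfect E F f :=
  statement_5_general V E f hV hf P hP h

end FFactor
end

section
/- The complete bipartite graph K_{ℵ₀,ℵ₁} with f ≡ 1 satisfies property P₄ (every f-factor F and vertex x with d_F(x) < f(x) admits an F-augmenting trail starting at x) but has no perfect f-factor (i.e., no perfect matching). -/
open Cardinal Set
open scoped Classical

namespace FFactor

variable {V : Type}

/-!
For a matching `F` of `K_{ℵ₀,ℵ₁}`, sending each matched right vertex to its partner injects it
into `ℕ`, so uncountably many right vertices stay unmatched; in particular there is no perfect
matching. An unmatched left vertex is joined to an unmatched right vertex, an augmenting trail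
of length two. From an unmatched right vertex `b`, either some left vertex `a` is unmatched
(trail `b a`), or every `a` is matched, to `m a`, and `b, 0, m 0, 1, m 1, 2, …` is an infinite
augmenting trail.
-/

section Degree

variable {V : Type} {F : Set (Sym2 V)} {x : V}

theorem deg_eq_zero_iff : deg F x = 0 ↔ ∀ e ∈ F, x ∉ e := by
  simp [deg, Cardinal.mk_eq_zero_iff, isEmpty_subtype]

theorem eq_of_mem_of_deg_le_one (h : deg F x ≤ 1) {e e' : Sym2 V}
    (he : e ∈ F) (hxe : x ∈ e) (he' : e' ∈ F) (hxe' : x ∈ e') : e = e' := by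
  rw [deg, Cardinal.le_one_iff_subsingleton] at h
  exact congrArg Subtype.val (h.elim ⟨e, he, hxe⟩ ⟨e', he', hxe'⟩)

end Degree

section Trail

variable {V : Type} {E F : Set (Sym2 V)} {f : V → Cardinal}

theorem exists_isAugTrail_of_edge {x y : V} (hne : x ≠ y) (hE : s(x, y) ∈ E)
    (hF : s(x, y) ∉ F) (hx : deg F x < f x) (hy : deg F y < f y) :
    ∃ (k : ℕ∞) (v : ℕ → V), v 0 = x ∧ IsAugTrail E F f k v := by
  have h_one : ∀ i : ℕ, 0 < i → (i : ℕ∞) < 2 → i = 1 := fun i hi hik => by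
    have : i < 2 := by exact_mod_cast hik
    omega
  refine ⟨2, fun i => if i = 0 then x else y, rfl,
    ⟨⟨by norm_num, ?_, ?_⟩, by norm_num, ?_, hx, ?_⟩⟩
  · intro i hi hik
    obtain rfl := h_one i hi hik
    simpa using hE
  · intro i j hi hj hik hjk hij
    exact absurd ((h_one i hi hik).trans (h_one j hj hjk).symm) hij
  · intro i hi hik
    obtain rfl := h_one i hi hik
    simpa using hF
  · exact Or.inr ⟨2, by norm_cast, even_two, Or.inl ⟨by simpa using hne, by simpa using hy⟩⟩

-- The edges are indexed from `0` here and from `1` in `IsAugTrail`, hence `Odd` for `Even`.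
theorem isAugTrail_top {v : ℕ → V} (hE : ∀ i, s(v i, v (i + 1)) ∈ E)
    (hinj : Function.Injective fun i => s(v i, v (i + 1)))
    (hF : ∀ i, s(v i, v (i + 1)) ∈ F ↔ Odd i) (h0 : deg F (v 0) < f (v 0)) :
    IsAugTrail E F f ⊤ v := by
  refine ⟨⟨le_top, ?_, ?_⟩, ENat.one_lt_top, ?_, h0, Or.inl rfl⟩
  · rintro i hi -
    obtain ⟨i, rfl⟩ := Nat.exists_eq_add_one.mpr hi
    exact hE i
  · rintro i j hi hj - - hij
    obtain ⟨i, rfl⟩ := Nat.exists_eq_add_one.mpr hi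
    obtain ⟨j, rfl⟩ := Nat.exists_eq_add_one.mpr hj
    exact fun h => hij (congrArg (· + 1) (hinj h))
  · rintro i hi -
    obtain ⟨i, rfl⟩ := Nat.exists_eq_add_one.mpr hi
    simpa [Nat.even_add_one] using hF i

end Trail

def bipartiteEdges (α β : Type) : Set (Sym2 (α ⊕ β)) :=
  {e | ∃ (a : α) (b : β), e = s(Sum.inl a, Sum.inr b)}

namespace bipartiteEdges

variable {α β : Type}

theorem mk_mem (a : α) (b : β) : s(Sum.inl a, Sum.inr b) ∈ bipartiteEdges α β :=
  ⟨a, b, rfl⟩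

theorem inC_one [Nonempty α] [Nonempty β] : inC (bipartiteEdges α β) fun _ => 1 := by
  refine ⟨?_, ?_⟩
  · rintro e ⟨a, b, rfl⟩
    simp
  · have one_le_deg {x : α ⊕ β} {e} (he : e ∈ bipartiteEdges α β) (hx : x ∈ e) :
        1 ≤ deg (bipartiteEdges α β) x :=
      Cardinal.one_le_iff_ne_zero.mpr fun h => deg_eq_zero_iff.mp h e he hx
    rintro (a | b)
    · exact one_le_deg (mk_mem a (Classical.arbitrary β)) (by simp)
    · exact one_le_deg (mk_mem (Classical.arbitrary α) b) (by simp)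

section Matching

variable {F : Set (Sym2 (α ⊕ β))}

theorem deg_inl_eq_zero_iff (hFE : F ⊆ bipartiteEdges α β) {a : α} :
    deg F (Sum.inl a) = 0 ↔ ∀ b : β, s(Sum.inl a, Sum.inr b) ∉ F := by
  refine deg_eq_zero_iff.trans ⟨fun h b hb => h _ hb (by simp), ?_⟩
  rintro h e he hae
  obtain ⟨a', b, rfl⟩ := hFE he
  obtain rfl : a = a' := by simpa using hae
  exact h b he

theorem deg_inr_eq_zero_iff (hFE : F ⊆ bipartiteEdges α β) {b : β} :
    deg F (Sum.inr b) = 0 ↔ ∀ a : α, s(Sum.inl a, Sum.inr b) ∉ F := by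
  refine deg_eq_zero_iff.trans ⟨fun h a ha => h _ ha (by simp), ?_⟩
  rintro h e he hbe
  obtain ⟨a, b', rfl⟩ := hFE he
  obtain rfl : b = b' := by simpa using hbe
  exact h a he

theorem right_eq_of_mem {a : α} {b b' : β} (ha : deg F (Sum.inl a) ≤ 1)
    (hb : s(Sum.inl a, Sum.inr b) ∈ F) (hb' : s(Sum.inl a, Sum.inr b') ∈ F) : b = b' := by
  simpa using eq_of_mem_of_deg_le_one ha hb (by simp) hb' (by simp)

theorem left_eq_of_mem {a a' : α} {b : β} (hb : deg F (Sum.inr b) ≤ 1)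
    (ha : s(Sum.inl a, Sum.inr b) ∈ F) (ha' : s(Sum.inl a', Sum.inr b) ∈ F) : a = a' := by
  simpa using eq_of_mem_of_deg_le_one hb ha (by simp) ha' (by simp)

theorem mk_le_of_forall_matched (hF : ∀ a, deg F (Sum.inl a) ≤ 1)
    (hmatched : ∀ b : β, ∃ a : α, s(Sum.inl a, Sum.inr b) ∈ F) : #β ≤ #α := by
  choose g hg using hmatched
  exact Cardinal.mk_le_of_injective (f := g) fun b b' h =>
    right_eq_of_mem (hF (g b)) (hg b) (h ▸ hg b')

theorem exists_deg_inr_eq_zero (hFE : F ⊆ bipartiteEdges α β)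
    (hF : ∀ a, deg F (Sum.inl a) ≤ 1) (hαβ : #α < #β) : ∃ b : β, deg F (Sum.inr b) = 0 := by
  by_contra! h
  refine (mk_le_of_forall_matched hF fun b => ?_).not_gt hαβ
  by_contra! hb
  exact h b ((deg_inr_eq_zero_iff hFE).mpr hb)

theorem not_exists_isPerfect_one (hαβ : #α < #β) :
    ¬ ∃ F, IsPerfect (bipartiteEdges α β) F fun _ => 1 := by
  rintro ⟨F, hFE, hF⟩
  obtain ⟨b, hb⟩ := exists_deg_inr_eq_zero hFE (fun a => (hF _).le) hαβ
  exact one_ne_zero ((hF _).symm.trans hb)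

end Matching

def zigzag (c : ℕ → β) (i : ℕ) : ℕ ⊕ β :=
  if Even i then Sum.inr (c (i / 2)) else Sum.inl (i / 2)

section Zigzag

variable {F : Set (Sym2 (ℕ ⊕ β))} {c : ℕ → β}

theorem zigzag_edge_two_mul (j : ℕ) :
    s(zigzag c (2 * j), zigzag c (2 * j + 1)) = s(Sum.inr (c j), Sum.inl j) := by
  simp [zigzag, Nat.mul_add_div]

theorem zigzag_edge_two_mul_add_one (j : ℕ) :
    s(zigzag c (2 * j + 1), zigzag c (2 * j + 1 + 1)) = s(Sum.inl j, Sum.inr (c (j + 1))) := by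
  have h : (2 * j + 1 + 1) / 2 = j + 1 := by omega
  simp [zigzag, Nat.even_add_one, Nat.mul_add_div, h]

theorem isAugTrail_zigzag {f : ℕ ⊕ β → Cardinal}
    (hc : ∀ j, s(Sum.inl j, Sum.inr (c j)) ∉ F)
    (hc' : ∀ j, s(Sum.inl j, Sum.inr (c (j + 1))) ∈ F)
    (h0 : deg F (Sum.inr (c 0)) < f (Sum.inr (c 0))) :
    IsAugTrail (bipartiteEdges ℕ β) F f ⊤ (zigzag c) := by
  have hF : ∀ i, s(zigzag c i, zigzag c (i + 1)) ∈ F ↔ Odd i := by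
    intro i
    obtain ⟨j, rfl | rfl⟩ := Nat.even_or_odd' i
    · rw [zigzag_edge_two_mul, Sym2.eq_swap]
      exact iff_of_false (hc j) (Nat.not_odd_iff_even.mpr (even_two_mul j))
    · simpa [zigzag_edge_two_mul_add_one] using hc' j
  refine isAugTrail_top (fun i => ?_) (fun i i' h => ?_) hF (by simpa [zigzag] using h0)
  · obtain ⟨j, rfl | rfl⟩ := Nat.even_or_odd' i
    · rw [zigzag_edge_two_mul, Sym2.eq_swap]
      exact mk_mem _ _
    · rw [zigzag_edge_two_mul_add_one]
      exact mk_mem _ _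
  · simp only at h
    have hodd : Odd i ↔ Odd i' := (hF i).symm.trans (by rw [h]; exact hF i')
    obtain ⟨j, rfl | rfl⟩ := Nat.even_or_odd' i <;>
      obtain ⟨j', rfl | rfl⟩ := Nat.even_or_odd' i' <;>
      simp only [zigzag_edge_two_mul, zigzag_edge_two_mul_add_one] at h <;>
      simp [Nat.odd_iff] at h hodd ⊢ <;> omega

end Zigzag

theorem p4_one (hβ : ℵ₀ < #β) : P4 (ℕ ⊕ β) (bipartiteEdges ℕ β) fun _ => 1 := by
  have : Nonempty β := Cardinal.mk_ne_zero_iff.mp (aleph0_pos.trans hβ).ne'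
  refine ⟨inC_one, ?_⟩
  rintro F ⟨hFE, hF⟩ x hx
  have hx0 : deg F x = 0 := Cardinal.lt_one_iff.mp hx
  rcases x with a | b
  · obtain ⟨b, hb⟩ := exists_deg_inr_eq_zero hFE (fun _ => hF _) (by rwa [Cardinal.mk_nat])
    exact exists_isAugTrail_of_edge (by simp) (mk_mem a b)
      ((deg_inl_eq_zero_iff hFE).mp hx0 b) hx (by simp [hb])
  by_cases hmatched : ∀ a : ℕ, ∃ b' : β, s(Sum.inl a, Sum.inr b') ∈ F
  · choose m hm using hmatched
    -- `b, 0, m 0, 1, m 1, …`: the edge `{j + 1, m j}` is not in `F` since `m j` is matched to `j`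
    refine ⟨⊤, zigzag fun | 0 => b | j + 1 => m j, by simp [zigzag],
      isAugTrail_zigzag ?_ hm hx⟩
    rintro (_ | j) h
    · exact (deg_inr_eq_zero_iff hFE).mp hx0 0 h
    · exact absurd (left_eq_of_mem (hF _) (hm j) h) j.succ_ne_self.symm
  · push Not at hmatched
    obtain ⟨a, ha⟩ := hmatched
    refine exists_isAugTrail_of_edge (by simp) (Sym2.eq_swap ▸ mk_mem a b) ?_ hx
      (by simp [(deg_inl_eq_zero_iff hFE).mpr ha])
    rw [Sym2.eq_swap]
    exact ha b

end bipartiteEdges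

/-- `K_{ℵ₀,ℵ₁}` with `f ≡ 1` satisfies `P₄` but has no perfect matching. -/
theorem statement_8 (B : Type) (hB : Cardinal.mk B = Cardinal.aleph 1) :
    P4 (ℕ ⊕ B) {e : Sym2 (ℕ ⊕ B) | ∃ (a : ℕ) (b : B), e = s(Sum.inl a, Sum.inr b)}
      (fun _ => 1) ∧
    ¬ ∃ F, IsPerfect
      {e : Sym2 (ℕ ⊕ B) | ∃ (a : ℕ) (b : B), e = s(Sum.inl a, Sum.inr b)} F
      (fun (_ : ℕ ⊕ B) => 1) := by
  have hcard : ℵ₀ < #B := hB ▸ aleph0_lt_aleph_one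
  exact ⟨bipartiteEdges.p4_one hcard,
    bipartiteEdges.not_exists_isPerfect_one (by rwa [Cardinal.mk_nat])⟩

end FFactor
end

section
/- (Transfer Lemma) Let P be a property that is necessary for the existence of a perfect f-factor (i.e., whenever a graph H has a perfect g-factor with (H,g) ∈ C, then P(H,g) holds). Let (G,f) ∈ C with |V(G)| = κ⁺ for an infinite cardinal κ. If G possesses a perfect f-factor, then (G,f) is not P-destructed. -/
open Cardinal Set
open scoped Classical

namespace FFactor

variable {V : Type}

/-
A perfect `f`-factor `F` of `G` restricts to a perfect factor of `G_α` as soon as `A_α` is closed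
under taking `F`-neighbours of vertices `y` with `f y < κ⁺`: a vertex of `V_α` with `f x = κ⁺` loses
only edges into `A_α`, of which there are at most `κ`, and a vertex outside `A_α` with `f x < κ⁺`
loses no edge at all. Such a vertex has at most `κ` neighbours, so by regularity of `κ⁺` the closed
indices form a club. It meets the stationary set of indices where `P` fails, but `P` holds
wherever a perfect factor exists.
-/

lemma deg_mono {F F' : Set (Sym2 V)} (h : F ⊆ F') (x : V) : deg F x ≤ deg F' x :=
  mk_subtype_mono fun _ he => ⟨h he.1, he.2⟩

lemma deg_eq_mk_setOf (F : Set (Sym2 V)) (x : V) : deg F x = #{y | s(x, y) ∈ F} :=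
  mk_congr
    { toFun := fun e => ⟨Sym2.Mem.other e.2.2, by
        simpa only [Set.mem_ofPred_eq, Sym2.other_spec] using e.2.1⟩
      invFun := fun y => ⟨s(x, y.1), y.2, Sym2.mem_mk_left x y⟩
      left_inv := fun e => Subtype.ext (Sym2.other_spec e.2.2)
      right_inv := fun y => Subtype.ext (Sym2.congr_right.1 (Sym2.other_spec _)) }

lemma deg_inducedE {S : Set V} {F : Set (Sym2 V)} (hS : ∀ e ∈ F, ∀ z ∈ e, z ∈ S) (x : S) :
    deg (inducedE S F) x = deg F x := by
  rw [deg_eq_mk_setOf, deg_eq_mk_setOf]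
  exact mk_congr (Equiv.subtypeSubtypeEquivSubtype fun h => hS _ h _ (Sym2.mem_mk_right _ _))

lemma not_isDiag_of_mem_inducedE {S : Set V} {E : Set (Sym2 V)} (hE : ∀ e ∈ E, ¬ e.IsDiag) :
    ∀ e ∈ inducedE S E, ¬ e.IsDiag :=
  fun _ he hd => hE _ he ((Sym2.isDiag_map Subtype.val_injective).2 hd)

lemma deg_le_mk (F : Set (Sym2 V)) (x : V) : deg F x ≤ #V :=
  deg_eq_mk_setOf F x ▸ mk_set_le _

lemma inC_of_isPerfect {E F : Set (Sym2 V)} {f : V → Cardinal} (hE : ∀ e ∈ E, ¬ e.IsDiag)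
    (hF : IsPerfect E F f) : inC E f :=
  ⟨hE, fun x => hF.2 x ▸ deg_mono hF.1 x⟩

lemma mem_subV_of_mem_subE {E : Set (Sym2 V)} {f : V → Cardinal} {c : Cardinal} {A : Set V}
    {e : Sym2 V} (he : e ∈ subE E f c A) {z : V} (hz : z ∈ e) : z ∈ subV f c A := by
  obtain ⟨-, x, y, rfl, hx, hy⟩ := he
  rcases Sym2.mem_iff.1 hz with rfl | rfl
  exacts [hx, Or.inl hy]

def IsClosedUnder (R : V → V → Prop) (B : Set V) : Prop :=
  ∀ y ∈ B, ∀ z, R y z → z ∈ B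

section subE
variable {E F : Set (Sym2 V)} {f : V → Cardinal} {c : Cardinal} {A : Set V} {x : V}

lemma deg_inter_subE_of_eq (hc : ℵ₀ ≤ c) (hFE : F ⊆ E) (hA : #A < c) (hx : x ∈ subV f c A)
    (hFx : deg F x = c) : deg (F ∩ subE E f c A) x = c := by
  refine le_antisymm (hFx ▸ deg_mono inter_subset_left x) ?_
  by_contra! hlt
  have hcover : {y | s(x, y) ∈ F} ⊆ {y | s(x, y) ∈ F ∩ subE E f c A} ∪ A := fun y hy => by
    by_cases hyA : y ∈ A
    · exact Or.inr hyA
    · exact Or.inl ⟨hy, hFE hy, x, y, rfl, hx, hyA⟩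
  have hle := (mk_le_mk_of_subset hcover).trans (mk_union_le _ _)
  rw [← deg_eq_mk_setOf, ← deg_eq_mk_setOf, hFx] at hle
  exact hle.not_gt (add_lt_of_lt hc hlt hA)

lemma deg_inter_subE_of_ne (hFE : F ⊆ E) (hfle : ∀ y, f y ≤ c)
    (hA : IsClosedUnder (fun y z => f y < c ∧ s(y, z) ∈ F) A) (hx : x ∈ subV f c A)
    (hxc : f x ≠ c) :
    deg (F ∩ subE E f c A) x = deg F x := by
  have hxA : x ∉ A := hx.resolve_right hxc
  have hkept : {y | s(x, y) ∈ F} ⊆ {y | s(x, y) ∈ subE E f c A} := by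
    intro y hy
    by_cases hyA : y ∈ A
    · have hyc : f y = c := by
        by_contra hyc
        exact hxA (hA y hyA x ⟨(hfle y).lt_of_ne hyc, Sym2.eq_swap ▸ hy⟩)
      exact ⟨hFE hy, y, x, Sym2.eq_swap, Or.inr hyc, hxA⟩
    · exact ⟨hFE hy, x, y, rfl, hx, hyA⟩
  rw [deg_eq_mk_setOf, deg_eq_mk_setOf, ← Set.inter_eq_left.2 hkept]
  rfl

lemma mk_setOf_lt_of_isPerfect (hF : IsPerfect E F f) (hc : c ≠ 0) (y : V) :
    #{z | f y < c ∧ s(y, z) ∈ F} < c := by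
  by_cases hy : f y < c
  · calc #{z | f y < c ∧ s(y, z) ∈ F} ≤ #{z | s(y, z) ∈ F} := mk_le_mk_of_subset fun _ hz => hz.2
      _ = f y := (deg_eq_mk_setOf F y).symm.trans (hF.2 y)
      _ < c := hy
  · simpa [hy] using pos_iff_ne_zero.2 hc

lemma isPerfect_inducedE_inter_subE (hc : ℵ₀ ≤ c) (hF : IsPerfect E F f) (hfle : ∀ y, f y ≤ c)
    (hA : #A < c) (hclosed : IsClosedUnder (fun y z => f y < c ∧ s(y, z) ∈ F) A) :
    IsPerfect (inducedE (subV f c A) (subE E f c A)) (inducedE (subV f c A) (F ∩ subE E f c A))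
      (fun x => f x.1) := by
  refine ⟨fun _ he => he.2, fun x => ?_⟩
  show deg _ x = f x
  rw [deg_inducedE fun _ he _ hz => mem_subV_of_mem_subE he.2 hz]
  by_cases hxc : f x = c
  · rw [hxc, deg_inter_subE_of_eq hc hF.1 hA x.2 ((hF.2 x).trans hxc)]
  · rw [deg_inter_subE_of_ne hF.1 hfle hclosed x.2 hxc, hF.2]

end subE

structure IsSmallFiltration (c : Cardinal) (A : Ordinal → Set V) : Prop where
  mono : ∀ α < c.ord, ∀ β, α ≤ β → β < c.ord → A α ⊆ A β
  mk_lt : ∀ α < c.ord, #(A α) < c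
  eq_iUnion_of_isSuccLimit : ∀ α < c.ord, Order.IsSuccLimit α → A α = ⋃ β : Iio α, A β.1
  iUnion_eq_univ : (⋃ α : Iio c.ord, A α.1) = Set.univ

lemma PDestruction.isSmallFiltration {P : GraphProp} {E : Set (Sym2 V)} {f : V → Cardinal}
    {c : Cardinal} {A : Ordinal → Set V} (h : PDestruction P E f c A) : IsSmallFiltration c A :=
  ⟨h.1, h.2.1, h.2.2.1, h.2.2.2.1⟩

namespace IsSmallFiltration

variable {c : Cardinal} {A : Ordinal → Set V} {R : V → V → Prop}

lemma exists_subset_of_mk_lt (hA : IsSmallFiltration c A) (hc : c.IsRegular) {B : Set V}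
    (hB : #B < c) : ∃ β < c.ord, B ⊆ A β := by
  have hmem (z : B) : ∃ i : Iio c.ord, z.1 ∈ A i := mem_iUnion.1 (hA.iUnion_eq_univ ▸ mem_univ _)
  choose idx hidx using hmem
  have hlt : ⨆ z, (idx z).1 < c.ord :=
    Ordinal.iSup_lt_of_lt_cof (hc.cof_ord.symm ▸ hB) fun z => (idx z).2
  refine ⟨_, hlt, fun z hz => ?_⟩
  exact hA.mono _ (idx ⟨z, hz⟩).2 _ (Ordinal.le_iSup (fun z => (idx z).1) ⟨z, hz⟩) hlt
    (hidx ⟨z, hz⟩)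

lemma exists_closure_step (hA : IsSmallFiltration c A) (hc : c.IsRegular)
    (hR : ∀ y, #{z | R y z} < c) {γ : Ordinal} (hγ : γ < c.ord) :
    ∃ β < c.ord, γ < β ∧ ∀ y ∈ A γ, ∀ z, R y z → z ∈ A β := by
  have hB : #(⋃ y ∈ A γ, {z | R y z}) < c :=
    (card_biUnion_lt_iff_forall_of_isRegular hc (hA.mk_lt γ hγ)).2 fun y _ => hR y
  obtain ⟨β, hβ, hsub⟩ := hA.exists_subset_of_mk_lt hc hB
  have hsucc : Order.succ γ < c.ord := (isSuccLimit_ord hc.1).succ_lt hγ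
  have hmax : max (Order.succ γ) β < c.ord := max_lt hsucc hβ
  exact ⟨_, hmax, (Order.lt_succ γ).trans_le (le_max_left _ _), fun y hy z hz =>
    hA.mono β hβ _ (le_max_right _ _) hmax (hsub (mem_biUnion hy hz))⟩

lemma isClosedUnder_of_cofinal (hA : IsSmallFiltration c A) {a : Ordinal} (ha : a < c.ord)
    (ha0 : a ≠ 0) (h : ∀ β < a, ∃ γ < a, β < γ ∧ ∀ y ∈ A β, ∀ z, R y z → z ∈ A γ) :
    IsClosedUnder R (A a) := by
  have hlim : Order.IsSuccLimit a := Ordinal.isSuccLimit_iff.2 ⟨ha0,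
    Order.isSuccPrelimit_of_succ_lt fun β hβ => by
      obtain ⟨γ, hγ, hβγ, -⟩ := h β hβ
      exact (Order.succ_le_of_lt hβγ).trans_lt hγ⟩
  intro y hy z hz
  rw [hA.eq_iUnion_of_isSuccLimit a ha hlim, mem_iUnion] at hy ⊢
  obtain ⟨⟨β, hβ⟩, hyβ⟩ := hy
  obtain ⟨γ, hγ, -, hγR⟩ := h β hβ
  exact ⟨⟨γ, hγ⟩, hγR y hyβ z hz⟩

lemma isClubIn_setOf_isClosedUnder (hA : IsSmallFiltration c A) (hc : c.IsRegular) (hc₀ : ℵ₀ < c)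
    (hR : ∀ y, #{z | R y z} < c) : IsClubIn {α | α < c.ord ∧ IsClosedUnder R (A α)} c.ord := by
  refine ⟨fun α hα => hα.1, fun a ha => ?_, fun a ha hne hsup => ⟨ha, ?_⟩⟩
  · choose next hnext using fun γ : Iio c.ord => hA.exists_closure_step hc hR γ.2
    let g (n : ℕ) : Iio c.ord := (fun γ => ⟨next γ, (hnext γ).1⟩)^[n] ⟨a, ha⟩
    have hstep (n : ℕ) : (g n).1 < g (n + 1) ∧ ∀ y ∈ A (g n), ∀ z, R y z → z ∈ A (g (n + 1)) := by
      simp only [g, Function.iterate_succ_apply']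
      exact (hnext _).2
    have hb : ⨆ n, (g n).1 < c.ord :=
      Ordinal.iSup_lt_of_lt_cof (by rwa [hc.cof_ord, mk_nat]) fun n => (g n).2
    have hgb (n : ℕ) : (g n).1 ≤ ⨆ n, (g n).1 := Ordinal.le_iSup _ n
    refine ⟨_, ⟨hb, hA.isClosedUnder_of_cofinal hb ?_ fun β hβ => ?_⟩, hgb 0⟩
    · exact ne_zero_of_lt ((hstep 0).1.trans_le (hgb 1))
    · obtain ⟨n, hn⟩ := Ordinal.lt_iSup_iff.1 hβ
      exact ⟨_, (hstep (n + 1)).1.trans_le (hgb (n + 2)), hn.trans (hstep n).1, fun y hy =>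
        (hstep n).2 y (hA.mono β (hβ.trans hb) _ hn.le (g n).2 hy)⟩
  · refine hA.isClosedUnder_of_cofinal ha ?_ fun β hβ => ?_
    · obtain ⟨γ, hγ⟩ := hne
      exact ne_zero_of_lt hγ.2
    · obtain ⟨γ, ⟨⟨-, hγR⟩, hγa⟩, hβγ⟩ := exists_lt_of_lt_csSup hne (hsup.symm ▸ hβ)
      exact ⟨γ, hγa, hβγ, fun y hy =>
        hγR y (hA.mono β (hβ.trans ha) γ hβγ.le (hγa.trans ha) hy)⟩

end IsSmallFiltration

/-- Transfer Lemma, Lemma 4. -/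
theorem statement_9 (P : GraphProp)
    (hnec : ∀ (W : Type) (E' : Set (Sym2 W)) (g : W → Cardinal),
      inC E' g → (∃ F, IsPerfect E' F g) → P W E' g)
    (V : Type) (E : Set (Sym2 V)) (f : V → Cardinal) (hC : inC E f)
    (κ : Cardinal) (hκ : ℵ₀ ≤ κ) (hV : Cardinal.mk V = Order.succ κ)
    (hperf : ∃ F, IsPerfect E F f) :
    ¬ PDestructed P E f (Order.succ κ) := by
  rintro ⟨A, hA⟩
  obtain ⟨F, hF⟩ := hperf
  have hreg : (Order.succ κ).IsRegular := isRegular_succ hκ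
  have hfle (y : V) : f y ≤ Order.succ κ := hF.2 y ▸ hV ▸ deg_le_mk F y
  have hfilt := hA.isSmallFiltration
  have hclub := hfilt.isClubIn_setOf_isClosedUnder hreg (hκ.trans_lt (Order.lt_succ κ))
    (mk_setOf_lt_of_isPerfect hF hreg.ne_zero)
  obtain ⟨α, ⟨hα, hnP⟩, -, hclosed⟩ := hA.2.2.2.2 _ hclub
  have hF' := isPerfect_inducedE_inter_subE (hκ.trans (Order.le_succ κ)) hF hfle
    (hfilt.mk_lt α hα) hclosed
  have hloops : ∀ e ∈ subE E f (Order.succ κ) (A α), ¬ e.IsDiag := fun e he => hC.1 e he.1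
  exact hnP (hnec _ _ _ (inC_of_isPerfect (not_isDiag_of_mem_inducedE hloops) hF') ⟨_, hF'⟩)

end FFactor
end
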